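/- For any irreducible finite set 𝒜 of real m×m matrices, any averaging function γ, any initial norm ‖·‖_0 on ℝ^m and any vector e with ‖e‖_0 = 1, the max-relaxation iteration satisfies: the sequence {ρ⁻_n} is nondecreasing, the sequence {ρ⁺_n} is nonincreasing, and ρ⁻_n ≤ ρ(𝒜) ≤ ρ⁺_n for every n ≥ 0. -/

import Mathlib

open Matrix Filter Topology Bornology Pointwise

/-- `N` is a norm on `ℝ^m`: nonnegative, definite, absolutely homogeneous, subadditive. -/
def IsNorm {m : ℕ} (N : (Fin m → ℝ) → ℝ) : Prop :=
  (∀ x, 0 ≤ N x) ∧ (∀ x, N x = 0 → x = 0) ∧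
    (∀ (t : ℝ) (x), N (t • x) = |t| * N x) ∧ (∀ x y, N (x + y) ≤ N x + N y)

/-- `N` is a seminorm on `ℝ^m`. -/
def IsSeminorm {m : ℕ} (N : (Fin m → ℝ) → ℝ) : Prop :=
  (∀ x, 0 ≤ N x) ∧
    (∀ (t : ℝ) (x), N (t • x) = |t| * N x) ∧ (∀ x y, N (x + y) ≤ N x + N y)

/-- The family `A` is irreducible: the matrices have no common invariant subspace
other than `⊥` and `⊤`. -/
def IsIrreducibleFamily {m r : ℕ} (A : Fin r → Matrix (Fin m) (Fin m) ℝ) : Prop :=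
  ∀ W : Submodule ℝ (Fin m → ℝ), (∀ i, ∀ x ∈ W, (A i).mulVec x ∈ W) → W = ⊥ ∨ W = ⊤

/-- The operator norm of a matrix acting on `ℝ^m` (with its sup norm). -/
noncomputable def matNorm {m : ℕ} (M : Matrix (Fin m) (Fin m) ℝ) : ℝ :=
  ‖LinearMap.toContinuousLinearMap M.mulVecLin‖

/-- The joint spectral radius of the family `A`:
`limsup_n (max over words of length n of the norm of the product)^(1/n)`. -/
noncomputable def jsr {m r : ℕ} (A : Fin r → Matrix (Fin m) (Fin m) ℝ) : ℝ :=
  Filter.atTop.limsup fun n : ℕ =>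
    (⨆ w : Fin n → Fin r, matNorm (List.ofFn fun k => A (w k)).prod) ^ (1 / (n : ℝ))

/-- `maxA A N x = max_i N (A_i x)`. -/
noncomputable def maxA {m r : ℕ} (A : Fin r → Matrix (Fin m) (Fin m) ℝ)
    (N : (Fin m → ℝ) → ℝ) (x : Fin m → ℝ) : ℝ :=
  ⨆ i, N ((A i).mulVec x)

/-- `ρ⁺ = max_{x ≠ 0} (max_i N (A_i x)) / N x`. -/
noncomputable def rhoSup {m r : ℕ} (A : Fin r → Matrix (Fin m) (Fin m) ℝ)
    (N : (Fin m → ℝ) → ℝ) : ℝ :=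
  sSup ((fun x => maxA A N x / N x) '' {x | x ≠ 0})

/-- `ρ⁻ = min_{x ≠ 0} (max_i N (A_i x)) / N x`. -/
noncomputable def rhoInf {m r : ℕ} (A : Fin r → Matrix (Fin m) (Fin m) ℝ)
    (N : (Fin m → ℝ) → ℝ) : ℝ :=
  sInf ((fun x => maxA A N x / N x) '' {x | x ≠ 0})

/-- An averaging function: continuous on positives, `γ t t = t`, and strictly
between `min` and `max` off the diagonal. -/
def IsAveraging (γ : ℝ → ℝ → ℝ) : Prop :=
  ContinuousOn (fun p : ℝ × ℝ => γ p.1 p.2) {p | 0 < p.1 ∧ 0 < p.2} ∧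
    (∀ t, 0 < t → γ t t = t) ∧
    ∀ t s, 0 < t → 0 < s → t ≠ s → min t s < γ t s ∧ γ t s < max t s

/-- The max-relaxation iteration: `‖x‖_{n+1} = max (‖x‖_n, γ_n⁻¹ max_i ‖A_i x‖_n)`
where `γ_n = γ (ρ⁻_n, ρ⁺_n)`. -/
noncomputable def iterN {m r : ℕ} (A : Fin r → Matrix (Fin m) (Fin m) ℝ)
    (γ : ℝ → ℝ → ℝ) (N0 : (Fin m → ℝ) → ℝ) : ℕ → (Fin m → ℝ) → ℝ
  | 0 => N0
  | n + 1 => fun x =>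
      max (iterN A γ N0 n x)
        ((γ (rhoInf A (iterN A γ N0 n)) (rhoSup A (iterN A γ N0 n)))⁻¹ *
          maxA A (iterN A γ N0 n) x)

/-- The normalized norms `‖x‖°_n = ‖x‖_n / ‖e‖_n` of the max-relaxation iteration
(for `n = 0` this equals `‖x‖_0` since `‖e‖_0 = 1`). -/
noncomputable def iterNnorm {m r : ℕ} (A : Fin r → Matrix (Fin m) (Fin m) ℝ)
    (γ : ℝ → ℝ → ℝ) (N0 : (Fin m → ℝ) → ℝ) (e : Fin m → ℝ) (n : ℕ) :
    (Fin m → ℝ) → ℝ :=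
  fun x => iterN A γ N0 n x / iterN A γ N0 n e

/-- `e⁺(N, N') = max_{x ≠ 0} N x / N' x`. -/
noncomputable def ePlus {m : ℕ} (N N' : (Fin m → ℝ) → ℝ) : ℝ :=
  sSup ((fun x => N x / N' x) '' {x | x ≠ 0})

/-- `e⁻(N, N') = min_{x ≠ 0} N x / N' x`. -/
noncomputable def eMinus {m : ℕ} (N N' : (Fin m → ℝ) → ℝ) : ℝ :=
  sInf ((fun x => N x / N' x) '' {x | x ≠ 0})

/-- The eccentricity of the norm `N` with respect to the norm `N'`. -/
noncomputable def ecc {m : ℕ} (N N' : (Fin m → ℝ) → ℝ) : ℝ :=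
  ePlus N N' / eMinus N N'

/-!
For every norm `N`, `ρ⁻(N) N x ≤ max_i N (A_i x) ≤ ρ⁺(N) N x`. Iterating along words, the largest
product of length `n` has norm between `c ρ⁻(N)^n` and `C ρ⁺(N)^n`, where `c, C > 0` compare `N`
with the sup norm; taking `n`-th roots gives `ρ⁻(N) ≤ ρ(𝒜) ≤ ρ⁺(N)`.

For the relaxed norm `N' = max (N, β max_i N (A_i ·))` with `β ≥ 0`, the two inequalities
`ρ⁻(N) N' ≤ max_i N' (A_i ·) ≤ ρ⁺(N) N'` hold separately for each term of the max, so `ρ⁻` can only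
grow and `ρ⁺` only shrink along the iteration; for `β < 0` the step leaves `N` unchanged.
-/

variable {m r : ℕ} {N : (Fin m → ℝ) → ℝ}

namespace IsNorm

def toSeminorm (hN : IsNorm N) : Seminorm ℝ (Fin m → ℝ) :=
  Seminorm.of N hN.2.2.2 fun t x => by rw [hN.2.2.1, Real.norm_eq_abs]

lemma map_zero (hN : IsNorm N) : N 0 = 0 :=
  _root_.map_zero hN.toSeminorm

lemma pos (hN : IsNorm N) {x : Fin m → ℝ} (hx : x ≠ 0) : 0 < N x :=
  (hN.1 x).lt_of_ne fun h => hx (hN.2.1 x h.symm)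

lemma continuous (hN : IsNorm N) : Continuous N :=
  continuousOn_univ.mp (hN.toSeminorm.convexOn.continuousOn isOpen_univ)

lemma exists_le_mul_norm (hN : IsNorm N) : ∃ C, 0 < C ∧ ∀ x, N x ≤ C * ‖x‖ :=
  hN.toSeminorm.bound_of_continuous_normedSpace hN.continuous

lemma exists_mul_norm_le [NeZero m] (hN : IsNorm N) : ∃ c, 0 < c ∧ ∀ x, c * ‖x‖ ≤ N x := by
  obtain ⟨x₀, hx₀, hmin⟩ := (isCompact_sphere (0 : Fin m → ℝ) 1).exists_isMinOn
    (NormedSpace.sphere_nonempty.mpr zero_le_one) hN.continuous.continuousOn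
  have hx₀ne : x₀ ≠ 0 := ne_zero_of_mem_unit_sphere ⟨x₀, hx₀⟩
  refine ⟨N x₀, hN.pos hx₀ne, fun x => ?_⟩
  rcases eq_or_ne x 0 with rfl | hx
  · simp [hN.map_zero]
  have hnx : 0 < ‖x‖ := norm_pos_iff.mpr hx
  have hu : ‖x‖⁻¹ • x ∈ Metric.sphere (0 : Fin m → ℝ) 1 := by
    simp [norm_smul, inv_mul_cancel₀ hnx.ne']
  calc N x₀ * ‖x‖ ≤ N (‖x‖⁻¹ • x) * ‖x‖ := by gcongr; exact hmin hu
    _ = N x := by rw [hN.2.2.1, abs_inv, abs_norm]; field_simp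

end IsNorm

lemma matNorm_nonneg (M : Matrix (Fin m) (Fin m) ℝ) : 0 ≤ matNorm M :=
  norm_nonneg _

lemma mulVec_le_matNorm_mul (M : Matrix (Fin m) (Fin m) ℝ) (x : Fin m → ℝ) :
    ‖M *ᵥ x‖ ≤ matNorm M * ‖x‖ :=
  (LinearMap.toContinuousLinearMap M.mulVecLin).le_opNorm x

lemma matNorm_le_of_mulVec_le {c C μ : ℝ} (hc : 0 < c) (hC : 0 ≤ C) (hμ : 0 ≤ μ)
    (hcN : ∀ x, c * ‖x‖ ≤ N x) (hNC : ∀ x, N x ≤ C * ‖x‖) {M : Matrix (Fin m) (Fin m) ℝ}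
    (hM : ∀ x, N (M *ᵥ x) ≤ μ * N x) : matNorm M ≤ C / c * μ := by
  refine ContinuousLinearMap.opNorm_le_bound _ (by positivity) fun x => ?_
  change ‖M *ᵥ x‖ ≤ C / c * μ * ‖x‖
  rw [div_mul_eq_mul_div, div_mul_eq_mul_div, le_div_iff₀ hc, mul_comm]
  calc c * ‖M *ᵥ x‖ ≤ μ * N x := (hcN _).trans (hM x)
    _ ≤ μ * (C * ‖x‖) := by gcongr; exact hNC x
    _ = C * μ * ‖x‖ := by ring

lemma le_matNorm_of_le_mulVec {c C μ : ℝ} (hC : 0 < C) (hμ : 0 ≤ μ)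
    (hcN : ∀ x, c * ‖x‖ ≤ N x) (hNC : ∀ x, N x ≤ C * ‖x‖) {M : Matrix (Fin m) (Fin m) ℝ}
    {x : Fin m → ℝ} (hx : x ≠ 0) (hM : μ * N x ≤ N (M *ᵥ x)) : c / C * μ ≤ matNorm M := by
  have hnx : 0 < ‖x‖ := norm_pos_iff.mpr hx
  rw [div_mul_eq_mul_div, div_le_iff₀ hC, ← mul_le_mul_iff_left₀ hnx]
  calc c * μ * ‖x‖ = μ * (c * ‖x‖) := by ring
    _ ≤ μ * N x := by gcongr; exact hcN x
    _ ≤ C * ‖M *ᵥ x‖ := hM.trans (hNC _)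
    _ ≤ C * (matNorm M * ‖x‖) := by gcongr; exact mulVec_le_matNorm_mul M x
    _ = matNorm M * C * ‖x‖ := by ring

section maxA

variable {A : Fin r → Matrix (Fin m) (Fin m) ℝ}

lemma le_maxA (x : Fin m → ℝ) (i : Fin r) : N (A i *ᵥ x) ≤ maxA A N x :=
  le_ciSup (f := fun i => N (A i *ᵥ x)) (Set.finite_range _).bddAbove i

lemma maxA_nonneg (hN : IsNorm N) (x : Fin m → ℝ) : 0 ≤ maxA A N x :=
  Real.iSup_nonneg fun _ => hN.1 _

lemma maxA_le {x : Fin m → ℝ} {c : ℝ} (h : ∀ i, N (A i *ᵥ x) ≤ c) (hc : 0 ≤ c) :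
    maxA A N x ≤ c :=
  Real.iSup_le h hc

lemma exists_maxA_eq [NeZero r] (x : Fin m → ℝ) : ∃ i, maxA A N x = N (A i *ᵥ x) := by
  obtain ⟨i, hi⟩ := Finite.exists_max fun i => N (A i *ᵥ x)
  exact ⟨i, le_antisymm (ciSup_le hi) (le_maxA x i)⟩

lemma maxA_smul (hN : IsNorm N) (t : ℝ) (x : Fin m → ℝ) :
    maxA A N (t • x) = |t| * maxA A N x := by
  simp only [maxA, Matrix.mulVec_smul, hN.2.2.1, Real.mul_iSup_of_nonneg (abs_nonneg t)]

lemma maxA_add_le (hN : IsNorm N) (x y : Fin m → ℝ) :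
    maxA A N (x + y) ≤ maxA A N x + maxA A N y :=
  maxA_le (fun i => by
      rw [Matrix.mulVec_add]
      exact (hN.2.2.2 _ _).trans (add_le_add (le_maxA x i) (le_maxA y i)))
    (add_nonneg (maxA_nonneg hN x) (maxA_nonneg hN y))

lemma exists_maxA_le_mul [NeZero m] (hN : IsNorm N) : ∃ K, ∀ x, maxA A N x ≤ K * N x := by
  obtain ⟨c, hc, hcN⟩ := hN.exists_mul_norm_le
  obtain ⟨C, hC, hNC⟩ := hN.exists_le_mul_norm
  have hsum : 0 ≤ ∑ i, matNorm (A i) := Finset.sum_nonneg fun i _ => matNorm_nonneg _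
  refine ⟨C / c * ∑ i, matNorm (A i), fun x => maxA_le (fun i => ?_) ?_⟩
  · calc N (A i *ᵥ x) ≤ C * (matNorm (A i) * ‖x‖) :=
          (hNC _).trans (by gcongr; exact mulVec_le_matNorm_mul _ _)
      _ ≤ C * ((∑ j, matNorm (A j)) * ‖x‖) := by
          gcongr
          exact Finset.single_le_sum (fun j _ => matNorm_nonneg (A j)) (Finset.mem_univ i)
      _ = C / c * (∑ j, matNorm (A j)) * (c * ‖x‖) := by field_simp
      _ ≤ C / c * (∑ j, matNorm (A j)) * N x := by
          gcongr
          exact hcN x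
  · exact mul_nonneg (by positivity) (hN.1 x)

end maxA

section rho

variable {A : Fin r → Matrix (Fin m) (Fin m) ℝ}

lemma image_maxA_div_nonempty [NeZero m] :
    ((fun x => maxA A N x / N x) '' {x | x ≠ 0}).Nonempty :=
  let ⟨x, hx⟩ := exists_ne (0 : Fin m → ℝ)
  ⟨_, x, hx, rfl⟩

lemma rhoInf_mul_le_maxA (hN : IsNorm N) (x : Fin m → ℝ) : rhoInf A N * N x ≤ maxA A N x := by
  rcases eq_or_ne x 0 with rfl | hx
  · rw [hN.map_zero, mul_zero]
    exact maxA_nonneg hN 0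
  have hbdd : BddBelow ((fun x => maxA A N x / N x) '' {x | x ≠ 0}) :=
    ⟨0, by rintro _ ⟨y, -, rfl⟩; exact div_nonneg (maxA_nonneg hN y) (hN.1 y)⟩
  exact (le_div_iff₀ (hN.pos hx)).mp (csInf_le hbdd ⟨x, hx, rfl⟩)

lemma maxA_le_rhoSup_mul [NeZero m] (hN : IsNorm N) (x : Fin m → ℝ) :
    maxA A N x ≤ rhoSup A N * N x := by
  obtain ⟨K, hK⟩ := exists_maxA_le_mul (A := A) hN
  rcases eq_or_ne x 0 with rfl | hx
  · simpa [hN.map_zero] using hK 0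
  have hbdd : BddAbove ((fun x => maxA A N x / N x) '' {x | x ≠ 0}) :=
    ⟨K, by rintro _ ⟨y, hy, rfl⟩; exact (div_le_iff₀ (hN.pos hy)).mpr (hK y)⟩
  exact (div_le_iff₀ (hN.pos hx)).mp (le_csSup hbdd ⟨x, hx, rfl⟩)

lemma le_rhoInf [NeZero m] (hN : IsNorm N) {p : ℝ} (h : ∀ x, p * N x ≤ maxA A N x) :
    p ≤ rhoInf A N :=
  le_csInf image_maxA_div_nonempty <| by
    rintro _ ⟨x, hx, rfl⟩; exact (le_div_iff₀ (hN.pos hx)).mpr (h x)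

lemma rhoSup_le [NeZero m] (hN : IsNorm N) {q : ℝ} (h : ∀ x, maxA A N x ≤ q * N x) :
    rhoSup A N ≤ q :=
  csSup_le image_maxA_div_nonempty <| by
    rintro _ ⟨x, hx, rfl⟩; exact (div_le_iff₀ (hN.pos hx)).mpr (h x)

lemma rhoInf_nonneg [NeZero m] (hN : IsNorm N) : 0 ≤ rhoInf A N :=
  le_rhoInf hN fun x => by simpa using maxA_nonneg hN x

lemma rhoSup_nonneg [NeZero m] (hN : IsNorm N) : 0 ≤ rhoSup A N := by
  obtain ⟨x, hx⟩ := exists_ne (0 : Fin m → ℝ)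
  have := (maxA_nonneg (A := A) hN x).trans (maxA_le_rhoSup_mul hN x)
  exact nonneg_of_mul_nonneg_left this (hN.pos hx)

end rho

section relax

variable {A : Fin r → Matrix (Fin m) (Fin m) ℝ} {β : ℝ}

/-- The max-relaxation step: `iterN` applies it with `β = γₙ⁻¹`. -/
noncomputable def relax (A : Fin r → Matrix (Fin m) (Fin m) ℝ) (N : (Fin m → ℝ) → ℝ) (β : ℝ) :
    (Fin m → ℝ) → ℝ :=
  fun x => max (N x) (β * maxA A N x)

lemma relax_of_nonpos (hN : IsNorm N) (hβ : β ≤ 0) : relax A N β = N :=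
  funext fun x =>
    max_eq_left ((mul_nonpos_of_nonpos_of_nonneg hβ (maxA_nonneg hN x)).trans (hN.1 x))

lemma IsNorm.relax (hN : IsNorm N) (β : ℝ) : IsNorm (relax A N β) := by
  rcases le_total β 0 with hβ | hβ
  · rwa [relax_of_nonpos hN hβ]
  refine ⟨fun x => (hN.1 x).trans (le_max_left _ _),
    fun x hx => hN.2.1 x (le_antisymm (hx ▸ le_max_left _ _) (hN.1 x)), fun t x => ?_,
    fun x y => max_le ?_ ?_⟩
  · simp only [_root_.relax, hN.2.2.1, maxA_smul hN, mul_left_comm β,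
      mul_max_of_nonneg _ _ (abs_nonneg t)]
  · exact (hN.2.2.2 x y).trans (add_le_add (le_max_left _ _) (le_max_left _ _))
  · calc β * maxA A N (x + y) ≤ β * maxA A N x + β * maxA A N y := by
          rw [← mul_add]; exact mul_le_mul_of_nonneg_left (maxA_add_le hN x y) hβ
      _ ≤ _ := add_le_add (le_max_right _ _) (le_max_right _ _)

lemma rhoInf_le_rhoInf_relax [NeZero m] [NeZero r] (hN : IsNorm N) (β : ℝ) :
    rhoInf A N ≤ rhoInf A (relax A N β) := by
  rcases le_total β 0 with hβ | hβ
  · rw [relax_of_nonpos hN hβ]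
  set p := rhoInf A N
  have hmono : ∀ x, maxA A N x ≤ maxA A (relax A N β) x := fun x =>
    maxA_le (fun i => (le_max_left _ _).trans (le_maxA (N := relax A N β) x i))
      (maxA_nonneg (hN.relax β) x)
  refine le_rhoInf (hN.relax β) fun x => ?_
  obtain ⟨i, hi⟩ := exists_maxA_eq (A := A) (N := N) x
  have hsecond : p * (β * maxA A N x) ≤ maxA A (relax A N β) x :=
    calc p * (β * maxA A N x) = β * (p * N (A i *ᵥ x)) := by rw [hi]; ring
      _ ≤ β * maxA A N (A i *ᵥ x) := by gcongr; exact rhoInf_mul_le_maxA hN _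
      _ ≤ maxA A (relax A N β) x := (le_max_right _ _).trans (le_maxA (N := relax A N β) x i)
  calc p * relax A N β x = max (p * N x) (p * (β * maxA A N x)) :=
        mul_max_of_nonneg _ _ (rhoInf_nonneg hN)
    _ ≤ maxA A (relax A N β) x := max_le ((rhoInf_mul_le_maxA hN x).trans (hmono x)) hsecond

lemma rhoSup_relax_le_rhoSup [NeZero m] (hN : IsNorm N) (β : ℝ) :
    rhoSup A (relax A N β) ≤ rhoSup A N := by
  rcases le_total β 0 with hβ | hβ
  · rw [relax_of_nonpos hN hβ]
  set q := rhoSup A N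
  have hq : 0 ≤ q := rhoSup_nonneg hN
  refine rhoSup_le (hN.relax β) fun x =>
    maxA_le (fun i => ?_) (mul_nonneg hq ((hN.relax β).1 x))
  have hfirst : N (A i *ᵥ x) ≤ q * N x := (le_maxA x i).trans (maxA_le_rhoSup_mul hN x)
  have hsecond : β * maxA A N (A i *ᵥ x) ≤ q * (β * maxA A N x) :=
    calc β * maxA A N (A i *ᵥ x) ≤ β * (q * N (A i *ᵥ x)) := by
          gcongr; exact maxA_le_rhoSup_mul hN _
      _ ≤ β * (q * maxA A N x) := by gcongr; exact le_maxA x i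
      _ = q * (β * maxA A N x) := by ring
  calc relax A N β (A i *ᵥ x) ≤ max (q * N x) (q * (β * maxA A N x)) := max_le_max hfirst hsecond
    _ = q * relax A N β x := (mul_max_of_nonneg _ _ hq).symm

end relax

section words

variable {A : Fin r → Matrix (Fin m) (Fin m) ℝ}

lemma prod_mulVec_le_rhoSup_pow_mul [NeZero m] (hN : IsNorm N) :
    ∀ (n : ℕ) (w : Fin n → Fin r) (x : Fin m → ℝ),
      N ((List.ofFn fun k => A (w k)).prod *ᵥ x) ≤ rhoSup A N ^ n * N x
  | 0, _, x => by simp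
  | n + 1, w, x => by
    rw [List.ofFn_succ, List.prod_cons, ← Matrix.mulVec_mulVec]
    calc N (A (w 0) *ᵥ ((List.ofFn fun k => A (w k.succ)).prod *ᵥ x))
        ≤ rhoSup A N * N ((List.ofFn fun k => A (w k.succ)).prod *ᵥ x) :=
          (le_maxA _ _).trans (maxA_le_rhoSup_mul hN _)
      _ ≤ rhoSup A N * (rhoSup A N ^ n * N x) := by
          gcongr
          · exact rhoSup_nonneg hN
          · exact prod_mulVec_le_rhoSup_pow_mul hN n _ x
      _ = rhoSup A N ^ (n + 1) * N x := by ring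

lemma exists_rhoInf_pow_mul_le_prod_mulVec [NeZero m] [NeZero r] (hN : IsNorm N) :
    ∀ (n : ℕ) (x : Fin m → ℝ), ∃ w : Fin n → Fin r,
      rhoInf A N ^ n * N x ≤ N ((List.ofFn fun k => A (w k)).prod *ᵥ x)
  | 0, x => ⟨Fin.elim0, by simp⟩
  | n + 1, x => by
    obtain ⟨i, hi⟩ := exists_maxA_eq (A := A) (N := N) x
    obtain ⟨w, hw⟩ := exists_rhoInf_pow_mul_le_prod_mulVec hN n (A i *ᵥ x)
    refine ⟨Fin.snoc w i, ?_⟩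
    rw [List.ofFn_succ', List.prod_concat, ← Matrix.mulVec_mulVec]
    simp only [Fin.snoc_castSucc, Fin.snoc_last]
    calc rhoInf A N ^ (n + 1) * N x = rhoInf A N ^ n * (rhoInf A N * N x) := by ring
      _ ≤ rhoInf A N ^ n * N (A i *ᵥ x) := by
          gcongr
          · exact pow_nonneg (rhoInf_nonneg hN) n
          · exact hi ▸ rhoInf_mul_le_maxA hN x
      _ ≤ _ := hw

end words

lemma tendsto_rpow_one_div_mul_pow {K p : ℝ} (hK : 0 < K) (hp : 0 ≤ p) :
    Tendsto (fun n : ℕ => (K * p ^ n) ^ (1 / (n : ℝ))) atTop (𝓝 p) := by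
  have hroot : Tendsto (fun n : ℕ => K ^ (1 / (n : ℝ))) atTop (𝓝 1) := by
    simpa only [Real.rpow_zero, Function.comp_def] using
      (Real.continuousAt_const_rpow hK.ne' (b := 0)).tendsto.comp
        tendsto_one_div_atTop_nhds_zero_nat
  refine (one_mul p ▸ hroot.mul_const p).congr' ?_
  filter_upwards [eventually_ne_atTop 0] with n hn
  rw [Real.mul_rpow hK.le (by positivity), ← Real.rpow_natCast, ← Real.rpow_mul hp,
    mul_one_div_cancel (by exact_mod_cast hn), Real.rpow_one]

lemma limsup_rpow_one_div_mem_Icc {s : ℕ → ℝ} {p q K D : ℝ} (hK : 0 < K) (hD : 0 < D)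
    (hp : 0 ≤ p) (hq : 0 ≤ q) (hlow : ∀ n, K * p ^ n ≤ s n) (hup : ∀ n, s n ≤ D * q ^ n) :
    limsup (fun n : ℕ => s n ^ (1 / (n : ℝ))) atTop ∈ Set.Icc p q := by
  have hs : ∀ n, 0 ≤ s n := fun n => (by positivity : 0 ≤ K * p ^ n).trans (hlow n)
  have hlower := tendsto_rpow_one_div_mul_pow hK hp
  have hupper := tendsto_rpow_one_div_mul_pow hD hq
  have hle_upper : ∀ n : ℕ, s n ^ (1 / (n : ℝ)) ≤ (D * q ^ n) ^ (1 / (n : ℝ)) := fun n =>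
    Real.rpow_le_rpow (hs n) (hup n) (by positivity)
  have hbdd : IsBoundedUnder (· ≤ ·) atTop fun n : ℕ => s n ^ (1 / (n : ℝ)) :=
    hupper.isBoundedUnder_le.mono_le (Eventually.of_forall hle_upper)
  constructor
  · rw [← hlower.limsup_eq]
    exact limsup_le_limsup (Eventually.of_forall fun n =>
      Real.rpow_le_rpow (by positivity) (hlow n) (by positivity)) hlower.isCoboundedUnder_le hbdd
  · rw [← hupper.limsup_eq]
    exact limsup_le_limsup (Eventually.of_forall hle_upper)
      (isCoboundedUnder_le_of_le atTop fun n => Real.rpow_nonneg (hs n) _)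
      hupper.isBoundedUnder_le

lemma jsr_mem_Icc [NeZero m] [NeZero r] {A : Fin r → Matrix (Fin m) (Fin m) ℝ} (hN : IsNorm N) :
    jsr A ∈ Set.Icc (rhoInf A N) (rhoSup A N) := by
  obtain ⟨c, hc, hcN⟩ := hN.exists_mul_norm_le
  obtain ⟨C, hC, hNC⟩ := hN.exists_le_mul_norm
  obtain ⟨x, hx⟩ := exists_ne (0 : Fin m → ℝ)
  refine limsup_rpow_one_div_mem_Icc (K := c / C) (D := C / c) (by positivity) (by positivity)
    (rhoInf_nonneg hN) (rhoSup_nonneg hN) (fun n => ?_) (fun n => ?_)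
  · obtain ⟨w, hw⟩ := exists_rhoInf_pow_mul_le_prod_mulVec (A := A) hN n x
    exact (le_matNorm_of_le_mulVec hC (pow_nonneg (rhoInf_nonneg hN) n) hcN hNC hx hw).trans
      (le_ciSup (f := fun w : Fin n → Fin r => matNorm (List.ofFn fun k => A (w k)).prod)
        (Set.finite_range _).bddAbove w)
  · exact ciSup_le fun w => matNorm_le_of_mulVec_le hc hC.le (pow_nonneg (rhoSup_nonneg hN) n)
      hcN hNC (prod_mulVec_le_rhoSup_pow_mul hN n w)

lemma isNorm_iterN {A : Fin r → Matrix (Fin m) (Fin m) ℝ} {γ : ℝ → ℝ → ℝ} (hN : IsNorm N) :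
    ∀ n, IsNorm (iterN A γ N n)
  | 0 => hN
  | n + 1 => (isNorm_iterN hN n).relax _

theorem stmt0_general {m r : ℕ} (hm : 2 ≤ m) (hr : 1 ≤ r)
    (A : Fin r → Matrix (Fin m) (Fin m) ℝ)
    (γ : ℝ → ℝ → ℝ)
    (N0 : (Fin m → ℝ) → ℝ) (hN0 : IsNorm N0) :
    (Monotone fun n => rhoInf A (iterN A γ N0 n)) ∧
      (Antitone fun n => rhoSup A (iterN A γ N0 n)) ∧
      ∀ n : ℕ, rhoInf A (iterN A γ N0 n) ≤ jsr A ∧ jsr A ≤ rhoSup A (iterN A γ N0 n) := by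
  have : NeZero m := ⟨by omega⟩
  have : NeZero r := ⟨by omega⟩
  have hN := isNorm_iterN (A := A) (γ := γ) hN0
  exact ⟨monotone_nat_of_le_succ fun n => rhoInf_le_rhoInf_relax (hN n) _,
    antitone_nat_of_succ_le fun n => rhoSup_relax_le_rhoSup (hN n) _,
    fun n => jsr_mem_Icc (hN n)⟩

/-- in the max-relaxation iteration, `{ρ⁻_n}` is nondecreasing,
`{ρ⁺_n}` is nonincreasing, and `ρ⁻_n ≤ ρ(𝒜) ≤ ρ⁺_n` for every `n`. -/
theorem stmt0 {m r : ℕ} (hm : 2 ≤ m) (hr : 1 ≤ r)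
    (A : Fin r → Matrix (Fin m) (Fin m) ℝ) (hA : IsIrreducibleFamily A)
    (γ : ℝ → ℝ → ℝ) (hγ : IsAveraging γ)
    (N0 : (Fin m → ℝ) → ℝ) (hN0 : IsNorm N0)
    (e : Fin m → ℝ) (he : N0 e = 1) :
    (Monotone fun n => rhoInf A (iterN A γ N0 n)) ∧
      (Antitone fun n => rhoSup A (iterN A γ N0 n)) ∧
      ∀ n : ℕ, rhoInf A (iterN A γ N0 n) ≤ jsr A ∧ jsr A ≤ rhoSup A (iterN A γ N0 n) :=
  stmt0_general hm hr A γ N0 hN0
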